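/- arXiv:2510.07416 — 4 statements merged into one kernel-verified Lean document; each statement's English description precedes it below -/
import Mathlib

section
/- Let s ≥ 3 be an integer and let p be a prime with (p-1) | (s-1). Then for every integer n with 3 ≤ n ≤ s, p divides f(n) := ∑_{k=0}^{n-1} (-1)^k · C(n,k) · (n-k)^s. -/
open Finset

theorem FiniteField.pow_eq_self_of_card_sub_one_dvd {K : Type*} [GroupWithZero K] [Fintype K]
    {s : ℕ} (hs : s ≠ 0) (h : Fintype.card K - 1 ∣ s - 1) (a : K) : a ^ s = a := by
  obtain ⟨m, hm⟩ := h
  rcases eq_or_ne a 0 with rfl | ha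
  · exact zero_pow hs
  · rw [show s = (Fintype.card K - 1) * m + 1 by omega, pow_succ, pow_mul,
      pow_card_sub_one_eq_one a ha, one_pow, one_mul]

-- `C(n,k) (n-k) = n C(n-1,k)`, so the sum is `n` times an alternating row sum of Pascal's triangle.
theorem Int.alternating_sum_range_choose_mul_sub {n : ℕ} (hn : 2 ≤ n) :
    ∑ k ∈ Finset.range n, (-1 : ℤ) ^ k * n.choose k * ((n : ℤ) - k) = 0 := by
  obtain ⟨m, rfl⟩ : ∃ m, n = m + 1 := ⟨n - 1, by omega⟩
  have hterm : ∀ k ∈ Finset.range (m + 1),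
      (-1 : ℤ) ^ k * (m + 1).choose k * (((m + 1 : ℕ) : ℤ) - k)
        = (m + 1) * ((-1) ^ k * m.choose k) := by
    intro k hk
    have hkm : k ≤ m + 1 := (mem_range.mp hk).le
    have hchoose := Nat.choose_mul_succ_eq m k
    zify [hkm] at hchoose
    push_cast
    linear_combination (-1 : ℤ) ^ k * hchoose.symm
  rw [sum_congr rfl hterm, ← mul_sum, Int.alternating_sum_range_choose_of_ne (by omega), mul_zero]

theorem prime_dvd_alternating_sum_general (s : ℕ) (hs : 3 ≤ s) (p : ℕ) (hp : p.Prime)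
    (hdvd : (p - 1) ∣ (s - 1)) (n : ℕ) (hn3 : 3 ≤ n) :
    (p : ℤ) ∣ ∑ k ∈ Finset.range n, (-1 : ℤ) ^ k * (n.choose k) * ((n : ℤ) - k) ^ s := by
  have := Fact.mk hp
  have hpow (a : ZMod p) : a ^ s = a :=
    FiniteField.pow_eq_self_of_card_sub_one_dvd (by omega) (by rwa [ZMod.card]) a
  rw [← ZMod.intCast_zmod_eq_zero_iff_dvd]
  have hsum := congrArg (Int.cast : ℤ → ZMod p)
    (Int.alternating_sum_range_choose_mul_sub (n := n) (by omega))
  push_cast at hsum ⊢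
  simpa only [hpow] using hsum

theorem prime_dvd_alternating_sum (s : ℕ) (hs : 3 ≤ s) (p : ℕ) (hp : p.Prime)
    (hdvd : (p - 1) ∣ (s - 1)) (n : ℕ) (hn3 : 3 ≤ n) (hns : n ≤ s) :
    (p : ℤ) ∣ ∑ k ∈ Finset.range n, (-1 : ℤ) ^ k * (n.choose k) * ((n : ℤ) - k) ^ s :=
  prime_dvd_alternating_sum_general s hs p hp hdvd n hn3
end

section
/- Let s ≥ 3 be odd, and let p be an odd prime such that p divides f(n) := ∑_{k=0}^{n-1} (-1)^k C(n,k)(n-k)^s for all 3 ≤ n ≤ s (assuming p ≤ s so the range is nonempty; in particular p | f(3) and p | f(4)). Then p divides (2^s - 2)(2^s - 4). -/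
open Finset

theorem sum_range_three_alternating_choose_mul_pow (s : ℕ) :
    ∑ k ∈ range 3, (-1 : ℤ) ^ k * ((3 : ℕ).choose k) * ((3 : ℤ) - k) ^ s =
      3 ^ s - 3 * 2 ^ s + 3 := by
  simp [sum_range_succ, Nat.choose, ← sub_eq_add_neg]

theorem sum_range_four_alternating_choose_mul_pow (s : ℕ) :
    ∑ k ∈ range 4, (-1 : ℤ) ^ k * ((4 : ℕ).choose k) * ((4 : ℤ) - k) ^ s =
      4 ^ s - 4 * 3 ^ s + 6 * 2 ^ s - 4 := by
  simp [sum_range_succ, Nat.choose, ← sub_eq_add_neg]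

theorem two_pow_sub_two_mul_two_pow_sub_four {R : Type*} [CommRing R] (s : ℕ) :
    ((2 : R) ^ s - 2) * (2 ^ s - 4) =
      (4 ^ s - 4 * 3 ^ s + 6 * 2 ^ s - 4) + 4 * (3 ^ s - 3 * 2 ^ s + 3) := by
  rw [show (4 : R) ^ s = 2 ^ s * 2 ^ s by rw [← mul_pow]; norm_num]
  ring

theorem odd_prime_dvd_two_pow_product_general (s : ℕ)
    (p : ℕ)
    (hf3 : (p : ℤ) ∣ ∑ k ∈ Finset.range 3, (-1 : ℤ) ^ k * ((3 : ℕ).choose k) * ((3 : ℤ) - k) ^ s)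
    (hf4 : (p : ℤ) ∣ ∑ k ∈ Finset.range 4, (-1 : ℤ) ^ k * ((4 : ℕ).choose k) * ((4 : ℤ) - k) ^ s) :
    (p : ℤ) ∣ ((2 : ℤ) ^ s - 2) * ((2 : ℤ) ^ s - 4) := by
  rw [sum_range_three_alternating_choose_mul_pow] at hf3
  rw [sum_range_four_alternating_choose_mul_pow] at hf4
  rw [two_pow_sub_two_mul_two_pow_sub_four]
  exact dvd_add hf4 (hf3.mul_left 4)

theorem odd_prime_dvd_two_pow_product (s : ℕ) (hs : 3 ≤ s) (hsodd : Odd s)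
    (p : ℕ) (hp : p.Prime) (hpodd : Odd p) (hps : p ≤ s)
    (hf : ∀ n : ℕ, 3 ≤ n → n ≤ s →
      (p : ℤ) ∣ ∑ k ∈ Finset.range n, (-1 : ℤ) ^ k * (n.choose k) * ((n : ℤ) - k) ^ s)
    (hf3 : (p : ℤ) ∣ ∑ k ∈ Finset.range 3, (-1 : ℤ) ^ k * ((3 : ℕ).choose k) * ((3 : ℤ) - k) ^ s)
    (hf4 : (p : ℤ) ∣ ∑ k ∈ Finset.range 4, (-1 : ℤ) ^ k * ((4 : ℕ).choose k) * ((4 : ℤ) - k) ^ s) :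
    (p : ℤ) ∣ ((2 : ℤ) ^ s - 2) * ((2 : ℤ) ^ s - 4) :=
  odd_prime_dvd_two_pow_product_general s p hf3 hf4
end

section
/- Let s ≥ 3 be odd. The greatest common divisor of the numbers f(n) = ∑_{k=0}^{n-1} (-1)^k · C(n,k) · (n-k)^s, taken over all integers n with 3 ≤ n ≤ s, equals the product ∏_{p ∈ P_s} p, where P_s = { p prime : p ≤ s and (p-1) | (s-1) }. -/
/-!
The sum `f n` is the iterated forward difference `Δⁿ xˢ` at `0`. Modulo a prime `p`, the functions
`xˢ` and `xʳ` agree on `𝔽_p` when `r ≡ s [MOD p - 1]` (with `r, s > 0`), so `Δⁿ xˢ ≡ Δⁿ xʳ`, which is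
`0` for `r < n` and `n!` for `r = n`. Taking `r = 1` shows that each `p ∈ P_s` divides every `f n`.
If `(q - 1) ∤ (s - 1)`, then `r = (s - 1) % (q - 1) + 1` is odd (as `s` is), so `3 ≤ r < q`, and
`f r ≡ r! ≢ 0 [ZMOD q]`; a prime `q > s` does not divide `f s = s!`. Finally
`f p = p · (Δ^(p-1) x^(s-1)) 1 ≡ p · (p - 1)! ≡ -p [ZMOD p²]` by Wilson, and for `p = 2` one uses
`f 3 = 3ˢ - 3 · 2ˢ + 3 ≡ 2 [ZMOD 4]` instead, since `n = 2` is not in the range.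
-/

open Finset fwdDiff
open scoped Nat

theorem FiniteField.pow_eq_pow_of_modEq {K : Type*} [Field K] [Fintype K] {r s : ℕ}
    (hr : r ≠ 0) (hs : s ≠ 0) (h : r ≡ s [MOD Fintype.card K - 1]) (x : K) : x ^ r = x ^ s := by
  wlog hrs : r ≤ s generalizing r s
  · exact (this hs hr h.symm (by omega)).symm
  obtain ⟨t, ht⟩ := (Nat.modEq_iff_dvd' hrs).mp h
  rcases eq_or_ne x 0 with rfl | hx
  · rw [zero_pow hr, zero_pow hs]
  · rw [← Nat.add_sub_cancel' hrs, ht, pow_add, pow_mul, pow_card_sub_one_eq_one x hx, one_pow,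
      mul_one]

theorem Nat.eq_prod_of_prime_dvd_iff {n : ℕ} {P : Finset ℕ} (hP : ∀ p ∈ P, p.Prime)
    (hdvd : ∀ p, p.Prime → (p ∣ n ↔ p ∈ P)) (hsq : ∀ p ∈ P, ¬ p ^ 2 ∣ n) :
    n = ∏ p ∈ P, p := by
  have hsf : Squarefree n := Nat.squarefree_iff_prime_squarefree.mpr fun p hp hpp ↦
    hsq p ((hdvd p hp).mp (dvd_of_mul_left_dvd hpp)) (sq p ▸ hpp)
  have hP : n.primeFactors = P := by
    ext p
    simp only [mem_primeFactors, ne_eq, hsf.ne_zero, not_false_eq_true, and_true]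
    exact ⟨fun ⟨hp, h⟩ ↦ (hdvd p hp).mp h, fun h ↦ ⟨hP p h, (hdvd p (hP p h)).mpr h⟩⟩
  rw [← hP, prod_primeFactors_of_squarefree hsf]

theorem Int.cast_fwdDiff_iter_pow {R : Type*} [Ring R] (n s : ℕ) (y : ℤ) :
    ((Δ_[1] ^[n] (fun x : ℤ ↦ x ^ s) y : ℤ) : R) = Δ_[1] ^[n] (fun x : R ↦ x ^ s) y := by
  simp [fwdDiff_iter_eq_sum_shift]

theorem sum_range_alternating_choose_mul_pow_eq_fwdDiff_iter {n s : ℕ} (hs : s ≠ 0) :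
    ∑ k ∈ range n, (-1 : ℤ) ^ k * n.choose k * ((n : ℤ) - k) ^ s =
      Δ_[1] ^[n] (fun x : ℤ ↦ x ^ s) 0 := by
  rw [fwdDiff_iter_eq_sum_shift, sum_range_succ', ← sum_range_reflect]
  simp only [zero_smul, zero_pow hs, smul_zero, add_zero]
  refine (sum_congr rfl fun k hk ↦ ?_).symm
  have hk : k < n := mem_range.mp hk
  rw [show n - 1 - k = n - (k + 1) by omega, Nat.choose_symm hk, Nat.cast_sub hk]
  simp

theorem fwdDiff_iter_succ_pow_succ_zero (m r : ℕ) :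
    Δ_[1] ^[m + 1] (fun x : ℤ ↦ x ^ (r + 1)) 0 = (m + 1) * Δ_[1] ^[m] (fun x : ℤ ↦ x ^ r) 1 := by
  rw [fwdDiff_iter_eq_sum_shift, fwdDiff_iter_eq_sum_shift, sum_range_succ', mul_sum]
  simp only [zero_smul, zero_add, pow_succ, mul_zero, smul_zero, add_zero]
  refine sum_congr rfl fun i _ ↦ ?_
  have hchoose : ((m + 1 : ℕ) : ℤ) * m.choose i = (m + 1).choose (i + 1) * ((i : ℤ) + 1) := by
    exact_mod_cast Nat.add_one_mul_choose_eq m i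
  simp only [Nat.add_sub_add_right, smul_eq_mul, nsmul_eq_mul, mul_one]
  push_cast at hchoose ⊢
  linear_combination (-1 : ℤ) ^ (m - i) * ((i : ℤ) + 1) ^ r * hchoose.symm

theorem fwdDiff_iter_pow_intCast_zmod_eq {p : ℕ} [Fact p.Prime] {r s : ℕ} (hr : r ≠ 0)
    (hs : s ≠ 0) (h : r ≡ s [MOD p - 1]) (n : ℕ) (y : ℤ) :
    ((Δ_[1] ^[n] (fun x : ℤ ↦ x ^ r) y : ℤ) : ZMod p) = Δ_[1] ^[n] (fun x : ℤ ↦ x ^ s) y := by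
  rw [← ZMod.card p] at h
  simp only [Int.cast_fwdDiff_iter_pow, FiniteField.pow_eq_pow_of_modEq hr hs h]

theorem prime_dvd_fwdDiff_iter_pow {p s n : ℕ} (hp : p.Prime) (hps : p - 1 ∣ s - 1)
    (hs : s ≠ 0) (hn : 2 ≤ n) : (p : ℤ) ∣ Δ_[1] ^[n] (fun x : ℤ ↦ x ^ s) 0 := by
  have := Fact.mk hp
  have h1s : 1 ≡ s [MOD p - 1] := (Nat.modEq_iff_dvd' (by omega)).mpr hps
  rw [← ZMod.intCast_zmod_eq_zero_iff_dvd, ← fwdDiff_iter_pow_intCast_zmod_eq one_ne_zero hs h1s,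
    fwdDiff_iter_pow_eq_zero_of_lt (by omega)]
  simp

theorem exists_not_dvd_fwdDiff_iter_pow {q s : ℕ} (hq : q.Prime) (hqs : ¬ q - 1 ∣ s - 1)
    (hs : Odd s) : ∃ n ∈ Icc 3 s, ¬ (q : ℤ) ∣ Δ_[1] ^[n] (fun x : ℤ ↦ x ^ s) 0 := by
  have := Fact.mk hq
  have hq2 : q ≠ 2 := by rintro rfl; exact hqs (one_dvd _)
  have hq_even : 2 ∣ q - 1 := (Nat.Odd.sub_odd (hq.odd_of_ne_two hq2) odd_one).two_dvd
  set m := (s - 1) % (q - 1)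
  have hm0 : m ≠ 0 := fun h ↦ hqs (Nat.dvd_of_mod_eq_zero h)
  have hm_even : m % 2 = 0 := by
    rw [Nat.mod_mod_of_dvd _ hq_even]; exact Nat.even_iff.mp (Nat.Odd.sub_odd hs odd_one)
  have hmq : m < q - 1 := Nat.mod_lt _ (by have := hq.two_le; omega)
  have hms : m ≤ s - 1 := Nat.mod_le _ _
  have hmod : m + 1 ≡ s [MOD q - 1] := by
    simpa [Nat.sub_add_cancel hs.pos] using (Nat.mod_modEq (s - 1) (q - 1)).add_right 1
  refine ⟨m + 1, mem_Icc.mpr ⟨by omega, by omega⟩, fun hdvd ↦ ?_⟩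
  rw [← ZMod.intCast_zmod_eq_zero_iff_dvd, ← fwdDiff_iter_pow_intCast_zmod_eq (by omega)
    hs.pos.ne' hmod, fwdDiff_iter_eq_factorial] at hdvd
  simp only [Pi.natCast_apply, Int.cast_natCast, ZMod.natCast_eq_zero_iff] at hdvd
  exact absurd ((hq.dvd_factorial).mp hdvd) (by omega)

theorem not_sq_dvd_fwdDiff_iter_pow_self {p s : ℕ} (hp : p.Prime) (hps : p - 1 ∣ s - 1)
    (hs : 2 ≤ s) : ¬ (p : ℤ) ^ 2 ∣ Δ_[1] ^[p] (fun x : ℤ ↦ x ^ s) 0 := by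
  have := Fact.mk hp
  obtain ⟨m, rfl⟩ : ∃ m, p = m + 1 := ⟨p - 1, (Nat.sub_add_cancel hp.one_le).symm⟩
  obtain ⟨r, rfl⟩ : ∃ r, s = r + 1 := ⟨s - 1, by omega⟩
  simp only [Nat.add_sub_cancel] at hps
  have hm : m ≠ 0 := by have := hp.two_le; omega
  have hmod : m ≡ r [MOD m] := (Nat.modEq_zero_iff_dvd.mpr (dvd_refl m)).trans
    (Nat.modEq_zero_iff_dvd.mpr hps).symm
  rw [fwdDiff_iter_succ_pow_succ_zero, sq, ← Nat.cast_succ,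
    mul_dvd_mul_iff_left (by positivity), ← ZMod.intCast_zmod_eq_zero_iff_dvd,
    ← fwdDiff_iter_pow_intCast_zmod_eq hm (by omega) (by simpa using hmod),
    fwdDiff_iter_eq_factorial]
  have hwilson : (m ! : ZMod (m + 1)) = -1 := by simpa using ZMod.wilsons_lemma (p := m + 1)
  simp [hwilson]

theorem not_four_dvd_fwdDiff_iter_three_pow {s : ℕ} (hs : Odd s) (hs1 : s ≠ 1) :
    ¬ (2 : ℤ) ^ 2 ∣ Δ_[1] ^[3] (fun x : ℤ ↦ x ^ s) 0 := by
  have hval : Δ_[1] ^[3] (fun x : ℤ ↦ x ^ s) 0 = 3 ^ s - 3 * 2 ^ s + 3 := by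
    simp [fwdDiff_iter_eq_sum_shift, sum_range_succ, zero_pow hs.pos.ne']
    ring
  obtain ⟨k, rfl⟩ := hs
  have hk : k ≠ 0 := by omega
  rw [hval, show (2 : ℤ) ^ 2 = ((4 : ℕ) : ℤ) by norm_num, ← ZMod.intCast_zmod_eq_zero_iff_dvd]
  push_cast
  simp only [pow_succ, pow_mul, show (3 : ZMod 4) ^ 2 = 1 by decide,
    show (2 : ZMod 4) ^ 2 = 0 by decide, zero_pow hk, one_pow]
  decide

theorem prime_dvd_gcd_fwdDiff_iter_pow_iff {s q : ℕ} (hs : 3 ≤ s) (hsodd : Odd s) (hq : q.Prime) :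
    (q : ℤ) ∣ (Icc 3 s).gcd (fun n ↦ Δ_[1] ^[n] (fun x : ℤ ↦ x ^ s) 0) ↔
      q ≤ s ∧ q - 1 ∣ s - 1 := by
  rw [Finset.dvd_gcd_iff]
  refine ⟨fun h ↦ ⟨?_, ?_⟩, fun ⟨_, hqs⟩ n hn ↦
    prime_dvd_fwdDiff_iter_pow hq hqs (by omega) (by grind)⟩
  · have hfac := h s (mem_Icc.mpr ⟨hs, le_rfl⟩)
    rw [congr_fun fwdDiff_iter_eq_factorial 0, Pi.natCast_apply, Int.natCast_dvd_natCast] at hfac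
    exact hq.dvd_factorial.mp hfac
  · by_contra hqs
    obtain ⟨n, hn, hndvd⟩ := exists_not_dvd_fwdDiff_iter_pow hq hqs hsodd
    exact hndvd (h n hn)

theorem not_sq_dvd_gcd_fwdDiff_iter_pow {s p : ℕ} (hs : 3 ≤ s) (hsodd : Odd s) (hp : p.Prime)
    (hps : p - 1 ∣ s - 1) (hpl : p ≤ s) :
    ¬ (p : ℤ) ^ 2 ∣ (Icc 3 s).gcd (fun n ↦ Δ_[1] ^[n] (fun x : ℤ ↦ x ^ s) 0) := by
  rw [Finset.dvd_gcd_iff]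
  intro h
  rcases eq_or_ne p 2 with rfl | hp2
  · exact not_four_dvd_fwdDiff_iter_three_pow hsodd (by omega) (h 3 (mem_Icc.mpr ⟨le_rfl, hs⟩))
  · have hp3 : 3 ≤ p := hp.two_le.lt_of_ne' hp2
    exact not_sq_dvd_fwdDiff_iter_pow_self hp hps (by omega) (h p (mem_Icc.mpr ⟨hp3, hpl⟩))

theorem gcd_alternating_sums_eq_prod_primes (s : ℕ) (hs : 3 ≤ s) (hsodd : Odd s) :
    (Finset.Icc 3 s).gcd
        (fun n => ∑ k ∈ Finset.range n, (-1 : ℤ) ^ k * (n.choose k) * ((n : ℤ) - k) ^ s) =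
      ∏ p ∈ (Finset.range (s + 1)).filter (fun p => p.Prime ∧ (p - 1) ∣ (s - 1)), (p : ℤ) := by
  simp_rw [sum_range_alternating_choose_mul_pow_eq_fwdDiff_iter (show s ≠ 0 by omega)]
  set P := (range (s + 1)).filter fun p => p.Prime ∧ (p - 1) ∣ (s - 1)
  set g := (Icc 3 s).gcd (fun n ↦ Δ_[1] ^[n] (fun x : ℤ ↦ x ^ s) 0)
  have hg : 0 ≤ g := Int.finsetGcd_nonneg
  rw [← Int.natAbs_of_nonneg hg, Nat.eq_prod_of_prime_dvd_iff (n := g.natAbs) (P := P)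
    (fun p hp ↦ (mem_filter.mp hp).2.1) (fun q hq ↦ ?_) (fun p hp ↦ ?_), Nat.cast_prod]
  · rw [← Int.natCast_dvd, prime_dvd_gcd_fwdDiff_iter_pow_iff hs hsodd hq]
    simp [P, hq]
  · obtain ⟨hpl, hp, hps⟩ := mem_filter.mp hp
    rw [← Int.natCast_dvd]
    exact_mod_cast not_sq_dvd_gcd_fwdDiff_iter_pow hs hsodd hp hps
      (Nat.lt_succ_iff.mp (mem_range.mp hpl))
end

section
/- Let A be a commutative ring with a filtration by ideals I = I^{⋆1} ⊇ I^{⋆2} ⊇ ... given by powers of an ideal I, with ∩_{n≥1} I^{⋆n} = {0}. Suppose δ ∈ I^{⋆2} and let [2] : A → A be a ring endomorphism (for the product ⋆) preserving the filtration such that for every n ≥ 2 and x ∈ I^{⋆n}, [2]x ≡ 2^n x (mod I^{⋆(n+1)}). If [2]δ - 2δ + δ⋆δ = 0, then δ ∈ I^{⋆n} for all n ≥ 1, hence δ = 0. -/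
/-!
If `δ ∈ I ^ n` with `n ≥ 2`, then `φ δ ≡ 2 ^ n δ` and `δ * δ ≡ 0` modulo `I ^ (n + 1)`, so the
relation `φ δ - 2 δ + δ δ = 0` gives `(2 - 2 ^ n) δ ∈ I ^ (n + 1)`. Since `2 - 2 ^ n` is a nonzero
rational, it is a unit in the `ℚ`-algebra `A`, hence `δ ∈ I ^ (n + 1)`. By induction `δ` lies in
every power of `I`, and separatedness forces `δ = 0`.
-/

lemma isUnit_two_sub_two_pow {A : Type*} [Ring A] [Algebra ℚ A] {n : ℕ} (hn : 2 ≤ n) :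
    IsUnit ((2 : A) - 2 ^ n) := by
  have hq : (2 : ℚ) - 2 ^ n ≠ 0 := by
    have : (2 : ℚ) ^ 2 ≤ 2 ^ n := pow_le_pow_right₀ (by norm_num) hn
    linarith
  simpa [map_ofNat] using (isUnit_iff_ne_zero.mpr hq).map (algebraMap ℚ A)

section

variable {A : Type*} [CommRing A] {I : Ideal A} {φ : A →+* A} {δ : A}

lemma two_sub_two_pow_mul_mem_pow_succ {n : ℕ} (hφn : φ δ - 2 ^ n * δ ∈ I ^ (n + 1))
    (hδn : δ ∈ I ^ n) (hδ1 : δ ∈ I) (hrel : φ δ - 2 * δ + δ * δ = 0) :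
    ((2 : A) - 2 ^ n) * δ ∈ I ^ (n + 1) := by
  have hsq : δ * δ ∈ I ^ (n + 1) := pow_succ I n ▸ Ideal.mul_mem_mul hδn hδ1
  have hφδ : φ δ = 2 * δ - δ * δ := by linear_combination hrel
  convert (I ^ (n + 1)).add_mem hφn hsq using 1
  rw [hφδ]
  ring

lemma mem_pow_of_two_le [Algebra ℚ A]
    (hφ : ∀ n : ℕ, 2 ≤ n → ∀ x ∈ I ^ n, φ x - (2 : A) ^ n * x ∈ I ^ (n + 1))
    (hδ : δ ∈ I ^ 2) (hrel : φ δ - 2 * δ + δ * δ = 0) {n : ℕ} (hn : 2 ≤ n) : δ ∈ I ^ n := by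
  have hδ1 : δ ∈ I := Ideal.pow_le_self two_ne_zero hδ
  induction n, hn using Nat.le_induction with
  | base => exact hδ
  | succ m hm hδm =>
    have hmul := two_sub_two_pow_mul_mem_pow_succ (hφ m hm δ hδm) hδm hδ1 hrel
    exact (Ideal.unit_mul_mem_iff_mem _ (isUnit_two_sub_two_pow hm)).mp hmul

end

theorem delta_in_all_powers_and_zero_general
    (A : Type*) [CommRing A] [Algebra ℚ A]
    (I : Ideal A)
    (hsep : ∀ x : A, (∀ n : ℕ, 1 ≤ n → x ∈ I ^ n) → x = 0)
    (φ : A →+* A)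
    (hφ : ∀ n : ℕ, 2 ≤ n → ∀ x ∈ I ^ n, φ x - (2 : A) ^ n * x ∈ I ^ (n + 1))
    (δ : A) (hδ : δ ∈ I ^ 2)
    (hrel : φ δ - 2 * δ + δ * δ = 0) :
    (∀ n : ℕ, 1 ≤ n → δ ∈ I ^ n) ∧ δ = 0 := by
  have hall : ∀ n : ℕ, 1 ≤ n → δ ∈ I ^ n := fun n hn =>
    Ideal.pow_le_pow_right n.le_succ (mem_pow_of_two_le hφ hδ hrel (by omega : 2 ≤ n + 1))
  exact ⟨hall, hsep δ hall⟩

theorem delta_in_all_powers_and_zero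
    (A : Type*) [CommRing A] [Algebra ℚ A]
    (I : Ideal A)
    (hsep : ∀ x : A, (∀ n : ℕ, 1 ≤ n → x ∈ I ^ n) → x = 0)
    (φ : A →+* A)
    (hφpres : ∀ n : ℕ, ∀ x ∈ I ^ n, φ x ∈ I ^ n)
    (hφ : ∀ n : ℕ, 2 ≤ n → ∀ x ∈ I ^ n, φ x - (2 : A) ^ n * x ∈ I ^ (n + 1))
    (δ : A) (hδ : δ ∈ I ^ 2)
    (hrel : φ δ - 2 * δ + δ * δ = 0) :
    (∀ n : ℕ, 1 ≤ n → δ ∈ I ^ n) ∧ δ = 0 :=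
  delta_in_all_powers_and_zero_general A I hsep φ hφ δ hδ hrel
end
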